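/- Let v1, v2, v3, v4, v5 be vectors in ℂ^3 such that [v1,v3,v4] ≠ 0, [v1,v2,v5] ≠ 0, [v1,v4,v5] ≠ 0 and [v2,v3,v4] ≠ 0. Then ([v1,v4,v5]·[v1,v2,v3] / ([v1,v3,v4]·[v1,v2,v5])) · (1 + [v1,v2,v4]·[v3,v4,v5] / ([v1,v4,v5]·[v2,v3,v4])) = [v1,v2,v3]·[v2,v4,v5] / ([v1,v2,v5]·[v2,v3,v4]). This is the wall-crossing (jumping) identity X_{r_-}^*(y_{γ21}·(1 + y_{γ13})) = X_{r_+}^*(y_{γ23}) for the Gr(3,5) spectral coordinates, verified in the proof that the solution of the Riemann–Hilbert problem jumps by the wall-crossing automorphism S(l). -/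

import Mathlib

/-- `det3 u v w` is the determinant of the 3×3 matrix whose columns are `u`, `v`, `w`. -/
def det3 (u v w : Fin 3 → ℂ) : ℂ :=
  Matrix.det (Matrix.transpose (Matrix.of ![u, v, w]))

lemma det3_expand (u v w : Fin 3 → ℂ) :
    det3 u v w = u 0 * (v 1 * w 2) - u 0 * (v 2 * w 1) - u 1 * (v 0 * w 2)
      + u 1 * (v 2 * w 0) + u 2 * (v 0 * w 1) - u 2 * (v 1 * w 0) := by
  rw [det3, Matrix.det_transpose]
  simp [Matrix.det_fin_three]
  ring

/-- The three-term Plücker relation. -/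
lemma pluecker (v1 v2 v3 v4 v5 : Fin 3 → ℂ) :
    det3 v1 v4 v5 * det3 v2 v3 v4 + det3 v1 v2 v4 * det3 v3 v4 v5 =
      det3 v1 v3 v4 * det3 v2 v4 v5 := by
  simp only [det3_expand]
  ring

/-- The wall-crossing (jumping) identity
`X_{r_-}^*(y_{γ21}·(1 + y_{γ13})) = X_{r_+}^*(y_{γ23})`
for the Gr(3,5) spectral coordinates. -/
theorem gr35_wall_crossing_identity (v1 v2 v3 v4 v5 : Fin 3 → ℂ)
    (h134 : det3 v1 v3 v4 ≠ 0) (h125 : det3 v1 v2 v5 ≠ 0)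
    (h145 : det3 v1 v4 v5 ≠ 0) (h234 : det3 v2 v3 v4 ≠ 0) :
    (det3 v1 v4 v5 * det3 v1 v2 v3 / (det3 v1 v3 v4 * det3 v1 v2 v5)) *
      (1 + det3 v1 v2 v4 * det3 v3 v4 v5 / (det3 v1 v4 v5 * det3 v2 v3 v4)) =
    det3 v1 v2 v3 * det3 v2 v4 v5 / (det3 v1 v2 v5 * det3 v2 v3 v4) := by
  have key := pluecker v1 v2 v3 v4 v5
  field_simp
  linear_combination det3 v1 v2 v3 * key
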